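/- Let A be a nonnegative n×n matrix with max-times spectral radius λ > 0 (the maximum cycle geometric mean). Then the minimum over all positive vectors x of x^- A x = max_{i,j} a_{ij} x_j / x_i equals λ, and the set of minimizers is exactly { (λ^{-1}A)* u : u positive }. -/

import Mathlib

open scoped BigOperators

noncomputable def mtMulMat {n : ℕ} (A B : Matrix (Fin n) (Fin n) ℝ) :
    Matrix (Fin n) (Fin n) ℝ :=
  fun i j => ⨆ k, A i k * B k j

noncomputable def mtMulVec {n : ℕ} (A : Matrix (Fin n) (Fin n) ℝ) (x : Fin n → ℝ) :
    Fin n → ℝ :=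
  fun i => ⨆ j, A i j * x j

noncomputable def mtPow {n : ℕ} (A : Matrix (Fin n) (Fin n) ℝ) : ℕ → Matrix (Fin n) (Fin n) ℝ
  | 0 => fun i j => if i = j then 1 else 0
  | m + 1 => mtMulMat (mtPow A m) A

noncomputable def mtTrace {n : ℕ} (A : Matrix (Fin n) (Fin n) ℝ) : ℝ := ⨆ i, A i i

noncomputable def mtTr {n : ℕ} (A : Matrix (Fin n) (Fin n) ℝ) : ℝ :=
  ⨆ m : Fin n, mtTrace (mtPow A (m.1 + 1))

noncomputable def kleeneStar {n : ℕ} (A : Matrix (Fin n) (Fin n) ℝ) :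
    Matrix (Fin n) (Fin n) ℝ :=
  fun i j => ⨆ m : Fin n, mtPow A m.1 i j

noncomputable def cycleMean {n : ℕ} (A : Matrix (Fin n) (Fin n) ℝ) (c : List (Fin n)) : ℝ :=
  (((c.zip (c.rotate 1)).map (fun p => A p.1 p.2)).prod) ^ ((1 : ℝ) / c.length)

noncomputable def specRad {n : ℕ} (A : Matrix (Fin n) (Fin n) ℝ) : ℝ :=
  sSup {r : ℝ | ∃ c : List (Fin n), c ≠ [] ∧ c.length ≤ n ∧ r = cycleMean A c}

/-! For positive `x`, multiplying the bounds `a_ij x_j ≤ M x_i` along a cycle telescopes the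
`x`'s away, so the cycle weight is at most `M ^ length`; hence `λ ≤ x⁻ A x` for every `x > 0`.
For `B = λ⁻¹ A` every cycle weighs at most `1`, so cutting cycles out of a walk never lowers its
weight: every `B ^ m` is dominated by `B*`, whence `B (B* u) ≤ B* u`, which for `x = B* u` is
exactly `x⁻ A x ≤ λ`. Conversely `x⁻ A x = λ` means `B x ≤ x`, so `B ^ m x ≤ x` for all `m`
and `x = B* x`. -/

open Finset

section Walk

variable {ι R : Type*}

def walkWeight [CommMonoid R] (A : Matrix ι ι R) (p : ℕ → ι) (m : ℕ) : R :=
  ∏ t ∈ range m, A (p t) (p (t + 1))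

section CommMonoid

variable [CommMonoid R] {A : Matrix ι ι R}

@[simp]
lemma walkWeight_zero (p : ℕ → ι) : walkWeight A p 0 = 1 := prod_range_zero _

lemma walkWeight_succ (p : ℕ → ι) (m : ℕ) :
    walkWeight A p (m + 1) = walkWeight A p m * A (p m) (p (m + 1)) :=
  prod_range_succ _ _

lemma walkWeight_succ' (p : ℕ → ι) (m : ℕ) :
    walkWeight A p (m + 1) = A (p 0) (p 1) * walkWeight A (fun t => p (t + 1)) m := by
  rw [walkWeight, prod_range_succ', mul_comm]
  rfl

lemma walkWeight_add (p : ℕ → ι) (a b : ℕ) :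
    walkWeight A p (a + b) = walkWeight A p a * walkWeight A (fun t => p (a + t)) b := by
  simp only [walkWeight, prod_range_add, add_assoc]

lemma walkWeight_congr {p q : ℕ → ι} {m : ℕ} (h : ∀ t ≤ m, p t = q t) :
    walkWeight A p m = walkWeight A q m :=
  prod_congr rfl fun t ht => by
    rw [h t (mem_range.1 ht).le, h (t + 1) (mem_range.1 ht)]

end CommMonoid

lemma walkWeight_smul [CommSemiring R] (c : R) (A : Matrix ι ι R) (p : ℕ → ι) (m : ℕ) :
    walkWeight (c • A) p m = c ^ m * walkWeight A p m := by
  simp only [walkWeight, Matrix.smul_apply, smul_eq_mul, prod_mul_distrib, prod_const, card_range]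

variable {A : Matrix ι ι ℝ}

lemma walkWeight_nonneg (hA : ∀ i j, 0 ≤ A i j) (p : ℕ → ι) (m : ℕ) : 0 ≤ walkWeight A p m :=
  prod_nonneg fun _ _ => hA _ _

lemma walkWeight_mul_le_pow_mul (hA : ∀ i j, 0 ≤ A i j) {x : ι → ℝ} {M : ℝ} (hM : 0 ≤ M)
    (h : ∀ i j, A i j * x j ≤ M * x i) (p : ℕ → ι) (m : ℕ) :
    walkWeight A p m * x (p m) ≤ M ^ m * x (p 0) := by
  induction m with
  | zero => simp
  | succ m ih =>
    calc walkWeight A p (m + 1) * x (p (m + 1))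
        = walkWeight A p m * (A (p m) (p (m + 1)) * x (p (m + 1))) := by
          rw [walkWeight_succ, mul_assoc]
      _ ≤ walkWeight A p m * (M * x (p m)) :=
          mul_le_mul_of_nonneg_left (h _ _) (walkWeight_nonneg hA p m)
      _ = M * (walkWeight A p m * x (p m)) := by ring
      _ ≤ M * (M ^ m * x (p 0)) := mul_le_mul_of_nonneg_left ih hM
      _ = M ^ (m + 1) * x (p 0) := by ring

lemma walkWeight_le_pow_of_mul_le (hA : ∀ i j, 0 ≤ A i j) {x : ι → ℝ} (hx : ∀ i, 0 < x i)
    {M : ℝ} (hM : 0 ≤ M) (h : ∀ i j, A i j * x j ≤ M * x i) {p : ℕ → ι} {m : ℕ}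
    (hp : p m = p 0) : walkWeight A p m ≤ M ^ m := by
  have := walkWeight_mul_le_pow_mul hA hM h p m
  rw [hp] at this
  exact le_of_mul_le_mul_right this (hx _)

lemma exists_walkWeight_le_of_cycle (hA : ∀ i j, 0 ≤ A i j) (p : ℕ → ι) {a k : ℕ}
    (hcl : p (a + k) = p a) (hcyc : walkWeight A (fun t => p (a + t)) k ≤ 1) (r : ℕ) :
    ∃ q : ℕ → ι, q 0 = p 0 ∧ q (a + r) = p (a + k + r) ∧
      walkWeight A p (a + k + r) ≤ walkWeight A q (a + r) := by
  set q : ℕ → ι := fun t => if t ≤ a then p t else p (t + k)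
  have hq_tail : (fun t => q (a + t)) = fun t => p (a + k + t) := by
    funext t
    rcases Nat.eq_zero_or_pos t with rfl | ht
    · simp [q, hcl]
    · simp only [q, if_neg (by omega : ¬ a + t ≤ a)]
      ring_nf
  refine ⟨q, by simp [q], congrFun hq_tail r, ?_⟩
  rw [walkWeight_add p, walkWeight_add q, walkWeight_add p a k, hq_tail,
    walkWeight_congr (p := q) (q := p) fun t ht => if_pos ht]
  calc _ ≤ walkWeight A p a * 1 * walkWeight A (fun t => p (a + k + t)) r := by
        gcongr <;> apply walkWeight_nonneg hA
    _ = _ := by rw [mul_one]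

end Walk

lemma exists_lt_le_card_map_eq {α : Type*} [Fintype α] (p : ℕ → α) :
    ∃ a b, a < b ∧ b ≤ Fintype.card α ∧ p a = p b := by
  obtain ⟨a, b, hab, h⟩ := Fintype.exists_ne_map_eq_of_card_lt
    (fun t : Fin (Fintype.card α + 1) => p t) (by simp)
  rcases Fin.lt_or_lt_of_ne hab with hlt | hlt
  · exact ⟨a, b, hlt, Nat.le_of_lt_succ b.2, h⟩
  · exact ⟨b, a, hlt, Nat.le_of_lt_succ a.2, h.symm⟩

lemma List.exists_eq_map_range {α : Type*} {c : List α} (hc : c ≠ []) :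
    ∃ k q, 0 < k ∧ q k = q 0 ∧ c = (List.range k).map q := by
  have hpos : 0 < c.length := List.length_pos_iff.2 hc
  refine ⟨c.length, fun t => c.get ⟨t % c.length, Nat.mod_lt _ hpos⟩, hpos, by simp, ?_⟩
  refine List.ext_getElem (by simp) fun t h _ => ?_
  simp [Nat.mod_eq_of_lt h]

section SpecRad

variable {n : ℕ} {A : Matrix (Fin n) (Fin n) ℝ}

lemma cycleMean_map_range {q : ℕ → Fin n} {k : ℕ} (hk : 0 < k) (hq : q k = q 0) :
    cycleMean A ((List.range k).map q) = walkWeight A q k ^ ((1 : ℝ) / k) := by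
  obtain ⟨k, rfl⟩ : ∃ k', k = k' + 1 := ⟨k - 1, by omega⟩
  have hrot : ((List.range (k + 1)).map q).rotate 1 =
      (List.range (k + 1)).map (fun t => q (t + 1)) := by
    conv_rhs => rw [List.range_succ, List.map_append, List.map_singleton, hq]
    rw [List.range_succ_eq_map, List.map_cons, List.rotate_cons_succ, List.rotate_zero,
      List.map_map]
    rfl
  rw [cycleMean, hrot, List.zip_map', List.map_map, List.length_map, List.length_range]
  rfl

lemma cycleMean_nonneg (hA : ∀ i j, 0 ≤ A i j) (c : List (Fin n)) : 0 ≤ cycleMean A c :=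
  Real.rpow_nonneg (List.prod_nonneg fun _ h => by
    obtain ⟨_, -, rfl⟩ := List.mem_map.1 h
    exact hA _ _) _

lemma specRad_nonneg (hA : ∀ i j, 0 ≤ A i j) : 0 ≤ specRad A :=
  Real.sSup_nonneg fun _ ⟨c, _, _, hr⟩ => hr ▸ cycleMean_nonneg hA c

lemma cycleMean_le_of_mul_le (hA : ∀ i j, 0 ≤ A i j) {x : Fin n → ℝ} (hx : ∀ i, 0 < x i)
    {M : ℝ} (hM : 0 ≤ M) (h : ∀ i j, A i j * x j ≤ M * x i) {c : List (Fin n)} (hc : c ≠ []) :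
    cycleMean A c ≤ M := by
  obtain ⟨k, q, hk, hq, rfl⟩ := List.exists_eq_map_range hc
  rw [cycleMean_map_range hk hq, one_div,
    Real.rpow_inv_le_iff_of_pos (walkWeight_nonneg hA q _) hM (by positivity), Real.rpow_natCast]
  exact walkWeight_le_pow_of_mul_le hA hx hM h hq

lemma specRad_le_of_mul_le (hA : ∀ i j, 0 ≤ A i j) {x : Fin n → ℝ} (hx : ∀ i, 0 < x i)
    {M : ℝ} (hM : 0 ≤ M) (h : ∀ i j, A i j * x j ≤ M * x i) : specRad A ≤ M :=
  Real.sSup_le (fun _ ⟨_, hc, _, hr⟩ => hr ▸ cycleMean_le_of_mul_le hA hx hM h hc) hM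

lemma bddAbove_cycleMeans (hA : ∀ i j, 0 ≤ A i j) :
    BddAbove {r : ℝ | ∃ c : List (Fin n), c ≠ [] ∧ c.length ≤ n ∧ r = cycleMean A c} := by
  refine ⟨⨆ i, ⨆ j, A i j, fun _ ⟨_, hc, _, hr⟩ => hr ▸ cycleMean_le_of_mul_le hA
    (x := fun _ => 1) (fun _ => one_pos) (Real.iSup_nonneg fun i => Real.iSup_nonneg (hA i))
    (fun i j => ?_) hc⟩
  simp only [mul_one]
  exact (le_ciSup (Finite.bddAbove_range (A i)) j).trans
    (le_ciSup (Finite.bddAbove_range fun i => ⨆ j, A i j) i)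

lemma cycleMean_le_specRad (hA : ∀ i j, 0 ≤ A i j) {c : List (Fin n)} (hc : c ≠ [])
    (hcn : c.length ≤ n) : cycleMean A c ≤ specRad A :=
  le_csSup (bddAbove_cycleMeans hA) ⟨c, hc, hcn, rfl⟩

lemma walkWeight_le_specRad_pow (hA : ∀ i j, 0 ≤ A i j) {q : ℕ → Fin n} {k : ℕ} (hk : 0 < k)
    (hkn : k ≤ n) (hq : q k = q 0) : walkWeight A q k ≤ specRad A ^ k := by
  have := cycleMean_le_specRad (A := A) hA (c := (List.range k).map q)
    (by simpa using hk.ne') (by simpa using hkn)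
  rwa [cycleMean_map_range hk hq, one_div, Real.rpow_inv_le_iff_of_pos (walkWeight_nonneg hA q _)
    (specRad_nonneg hA) (by positivity), Real.rpow_natCast] at this

lemma specRad_smul_le (hA : ∀ i j, 0 ≤ A i j) {c : ℝ} (hc : 0 ≤ c) :
    specRad (c • A) ≤ c * specRad A := by
  refine Real.sSup_le (fun _ ⟨l, hl, hln, hr⟩ => ?_) (mul_nonneg hc (specRad_nonneg hA))
  obtain ⟨k, q, hk, hq, rfl⟩ := List.exists_eq_map_range hl
  have hmean := cycleMean_le_specRad hA hl hln
  rw [cycleMean_map_range hk hq] at hr hmean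
  rw [hr, walkWeight_smul, Real.mul_rpow (by positivity) (walkWeight_nonneg hA q _), one_div,
    Real.pow_rpow_inv_natCast hc hk.ne', ← one_div]
  exact mul_le_mul_of_nonneg_left hmean hc

lemma specRad_le_iSup_ratio (hA : ∀ i j, 0 ≤ A i j) {x : Fin n → ℝ} (hx : ∀ i, 0 < x i) :
    specRad A ≤ ⨆ i, ⨆ j, A i j * x j / x i := by
  refine specRad_le_of_mul_le hA hx
    (Real.iSup_nonneg fun i => Real.iSup_nonneg fun j =>
      div_nonneg (mul_nonneg (hA i j) (hx j).le) (hx i).le) fun i j => ?_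
  rw [← div_le_iff₀ (hx i)]
  exact (le_ciSup (Finite.bddAbove_range _) j).trans
    (le_ciSup (Finite.bddAbove_range fun i => ⨆ j, A i j * x j / x i) i)

end SpecRad

section MaxTimes

variable {n : ℕ} {B : Matrix (Fin n) (Fin n) ℝ}

lemma mtPow_nonneg (hB : ∀ i j, 0 ≤ B i j) (m : ℕ) (i j : Fin n) : 0 ≤ mtPow B m i j := by
  induction m generalizing j with
  | zero => simp only [mtPow]; split_ifs <;> norm_num
  | succ m ih => exact Real.iSup_nonneg fun k => mul_nonneg (ih k) (hB k j)

lemma walkWeight_le_mtPow (hB : ∀ i j, 0 ≤ B i j) (p : ℕ → Fin n) (m : ℕ) :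
    walkWeight B p m ≤ mtPow B m (p 0) (p m) := by
  induction m with
  | zero => simp [mtPow]
  | succ m ih =>
    rw [walkWeight_succ]
    exact (mul_le_mul_of_nonneg_right ih (hB _ _)).trans
      (le_ciSup (Finite.bddAbove_range fun k => mtPow B m (p 0) k * B k (p (m + 1))) (p m))

lemma mtPow_eq_zero_or_exists_walk (m : ℕ) (i j : Fin n) :
    mtPow B m i j = 0 ∨ ∃ p : ℕ → Fin n, p 0 = i ∧ p m = j ∧ walkWeight B p m = mtPow B m i j := by
  induction m generalizing j with
  | zero =>
    by_cases h : i = j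
    · exact Or.inr ⟨fun _ => i, rfl, h, by simp [mtPow, h]⟩
    · exact Or.inl (if_neg h)
  | succ m ih =>
    have : Nonempty (Fin n) := ⟨i⟩
    obtain ⟨k, hk⟩ := exists_eq_ciSup_of_finite (f := fun k => mtPow B m i k * B k j)
    have hsucc : mtPow B (m + 1) i j = mtPow B m i k * B k j := hk.symm
    rcases ih k with h0 | ⟨p, hp0, hpm, hp⟩
    · exact Or.inl (by rw [hsucc, h0, zero_mul])
    · refine Or.inr ⟨fun t => if t ≤ m then p t else j, by simp [hp0], by simp, ?_⟩
      rw [walkWeight_succ, walkWeight_congr (q := p) fun t ht => if_pos ht, hp, hsucc]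
      simp [hpm]

lemma mul_mtPow_le (hB : ∀ i j, 0 ≤ B i j) (m : ℕ) (i j k : Fin n) :
    B i j * mtPow B m j k ≤ mtPow B (m + 1) i k := by
  rcases mtPow_eq_zero_or_exists_walk m j k with h0 | ⟨p, rfl, rfl, hp⟩
  · rw [h0, mul_zero]
    exact mtPow_nonneg hB _ _ _
  · have := walkWeight_le_mtPow hB (fun t => if t = 0 then i else p (t - 1)) (m + 1)
    simpa [walkWeight_succ', hp] using this

lemma mtPow_mul_le_of_mul_le (hB : ∀ i j, 0 ≤ B i j) {x : Fin n → ℝ} (hx : ∀ i, 0 ≤ x i)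
    (h : ∀ i j, B i j * x j ≤ x i) (m : ℕ) (i j : Fin n) : mtPow B m i j * x j ≤ x i := by
  rcases mtPow_eq_zero_or_exists_walk m i j with h0 | ⟨p, rfl, rfl, hp⟩
  · rw [h0, zero_mul]
    exact hx _
  · simpa [hp] using walkWeight_mul_le_pow_mul hB zero_le_one (by simpa using h) p m

lemma one_le_kleeneStar_self (i : Fin n) : 1 ≤ kleeneStar B i i :=
  (if_pos rfl).symm.le.trans
    (le_ciSup (Finite.bddAbove_range fun m : Fin n => mtPow B m i i) ⟨0, i.pos⟩)

lemma mtPow_le_kleeneStar_of_lt {m : ℕ} (hm : m < n) (i j : Fin n) :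
    mtPow B m i j ≤ kleeneStar B i j :=
  le_ciSup (Finite.bddAbove_range fun m : Fin n => mtPow B m i j) ⟨m, hm⟩

lemma kleeneStar_nonneg (hB : ∀ i j, 0 ≤ B i j) (i j : Fin n) : 0 ≤ kleeneStar B i j :=
  (mtPow_nonneg hB 0 i j).trans (mtPow_le_kleeneStar_of_lt i.pos i j)

/-- When every cycle of `B` weighs at most `1`, every walk is dominated by one of length `< n`:
cutting out the cycle found by pigeonhole among its first `n + 1` vertices does not lower the
weight. -/
lemma walkWeight_le_kleeneStar (hB : ∀ i j, 0 ≤ B i j) (hB1 : specRad B ≤ 1) (m : ℕ)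
    (p : ℕ → Fin n) : walkWeight B p m ≤ kleeneStar B (p 0) (p m) := by
  induction m using Nat.strong_induction_on generalizing p with
  | _ m ih =>
  by_cases hm : m < n
  · exact (walkWeight_le_mtPow hB p m).trans (mtPow_le_kleeneStar_of_lt hm _ _)
  obtain ⟨a, b, hab, hbn, hpab⟩ := exists_lt_le_card_map_eq p
  rw [Fintype.card_fin] at hbn
  obtain ⟨k, rfl⟩ : ∃ k, b = a + k := ⟨b - a, by omega⟩
  obtain ⟨r, rfl⟩ : ∃ r, m = a + k + r := ⟨m - (a + k), by omega⟩
  have hcyc : walkWeight B (fun t => p (a + t)) k ≤ 1 :=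
    (walkWeight_le_specRad_pow hB (by omega) (by omega) (by simpa using hpab.symm)).trans
      (pow_le_one₀ (specRad_nonneg hB) hB1)
  obtain ⟨q, hq0, hqr, hle⟩ := exists_walkWeight_le_of_cycle hB p hpab.symm hcyc r
  calc walkWeight B p (a + k + r) ≤ walkWeight B q (a + r) := hle
    _ ≤ kleeneStar B (p 0) (p (a + k + r)) := hq0 ▸ hqr ▸ ih (a + r) (by omega) q

lemma mtPow_le_kleeneStar (hB : ∀ i j, 0 ≤ B i j) (hB1 : specRad B ≤ 1) (m : ℕ) (i j : Fin n) :
    mtPow B m i j ≤ kleeneStar B i j := by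
  rcases mtPow_eq_zero_or_exists_walk m i j with h0 | ⟨p, rfl, rfl, hp⟩
  · exact h0 ▸ kleeneStar_nonneg hB _ _
  · exact hp ▸ walkWeight_le_kleeneStar hB hB1 m p

lemma mul_kleeneStar_le (hB : ∀ i j, 0 ≤ B i j) (hB1 : specRad B ≤ 1) (i j k : Fin n) :
    B i j * kleeneStar B j k ≤ kleeneStar B i k := by
  rw [kleeneStar, Real.mul_iSup_of_nonneg (hB i j)]
  exact Real.iSup_le (fun m => (mul_mtPow_le hB m i j k).trans (mtPow_le_kleeneStar hB hB1 _ i k))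
    (kleeneStar_nonneg hB i k)

lemma mul_mtMulVec_kleeneStar_le (hB : ∀ i j, 0 ≤ B i j) (hB1 : specRad B ≤ 1)
    {u : Fin n → ℝ} (hu : ∀ i, 0 ≤ u i) (i j : Fin n) :
    B i j * mtMulVec (kleeneStar B) u j ≤ mtMulVec (kleeneStar B) u i := by
  rw [mtMulVec, Real.mul_iSup_of_nonneg (hB i j)]
  refine ciSup_mono (Finite.bddAbove_range _) fun k => ?_
  rw [← mul_assoc]
  exact mul_le_mul_of_nonneg_right (mul_kleeneStar_le hB hB1 i j k) (hu k)

lemma le_mtMulVec_kleeneStar {x : Fin n → ℝ} (hx : ∀ i, 0 ≤ x i) (i : Fin n) :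
    x i ≤ mtMulVec (kleeneStar B) x i :=
  (le_mul_of_one_le_left (hx i) (one_le_kleeneStar_self i)).trans
    (le_ciSup (Finite.bddAbove_range fun j => kleeneStar B i j * x j) i)

lemma mtMulVec_kleeneStar_eq_self (hB : ∀ i j, 0 ≤ B i j) {x : Fin n → ℝ} (hx : ∀ i, 0 ≤ x i)
    (h : ∀ i j, B i j * x j ≤ x i) : mtMulVec (kleeneStar B) x = x := by
  funext i
  refine le_antisymm (Real.iSup_le (fun j => ?_) (hx i)) (le_mtMulVec_kleeneStar hx i)
  rw [kleeneStar, Real.iSup_mul_of_nonneg (hx j)]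
  exact Real.iSup_le (fun m => mtPow_mul_le_of_mul_le hB hx h m i j) (hx i)

end MaxTimes

lemma iSup_ratio_le_iff {n : ℕ} {A : Matrix (Fin n) (Fin n) ℝ} {x : Fin n → ℝ}
    (hx : ∀ i, 0 < x i) {M : ℝ} (hM : 0 ≤ M) :
    (⨆ i, ⨆ j, A i j * x j / x i) ≤ M ↔ ∀ i j, A i j * x j ≤ M * x i := by
  simp only [← div_le_iff₀ (hx _)]
  refine ⟨fun h i j => ?_, fun h => Real.iSup_le (fun i => Real.iSup_le (h i) hM) hM⟩
  exact (le_ciSup (Finite.bddAbove_range _) j).trans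
    ((le_ciSup (Finite.bddAbove_range fun i => ⨆ j, A i j * x j / x i) i).trans h)

theorem stmt7_general {n : ℕ} (A : Matrix (Fin n) (Fin n) ℝ)
    (hA : ∀ i j, 0 ≤ A i j) (hlam : 0 < specRad A) :
    IsLeast {v : ℝ | ∃ x : Fin n → ℝ, (∀ i, 0 < x i) ∧
        v = ⨆ i, ⨆ j, A i j * x j / x i} (specRad A) ∧
      ∀ x : Fin n → ℝ, (∀ i, 0 < x i) →
        ((⨆ i, ⨆ j, A i j * x j / x i) = specRad A ↔
          ∃ u : Fin n → ℝ, (∀ i, 0 < u i) ∧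
            x = mtMulVec (kleeneStar ((specRad A)⁻¹ • A)) u) := by
  set lam := specRad A
  set B := lam⁻¹ • A
  have hB : ∀ i j, 0 ≤ B i j := fun i j => mul_nonneg (inv_nonneg.2 hlam.le) (hA i j)
  have hB1 : specRad B ≤ 1 :=
    (specRad_smul_le hA (inv_nonneg.2 hlam.le)).trans_eq (inv_mul_cancel₀ hlam.ne')
  have hratio (x : Fin n → ℝ) (hx : ∀ i, 0 < x i) :
      (⨆ i, ⨆ j, A i j * x j / x i) ≤ lam ↔ ∀ i j, B i j * x j ≤ x i := by
    simp only [iSup_ratio_le_iff hx hlam.le, B, Matrix.smul_apply, smul_eq_mul, mul_assoc,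
      inv_mul_le_iff₀ hlam]
  have hstar (u : Fin n → ℝ) (hu : ∀ i, 0 < u i) :
      (∀ i, 0 < mtMulVec (kleeneStar B) u i) ∧
        (⨆ i, ⨆ j, A i j * mtMulVec (kleeneStar B) u j / mtMulVec (kleeneStar B) u i) = lam := by
    have hpos (i : Fin n) : 0 < mtMulVec (kleeneStar B) u i :=
      (hu i).trans_le (le_mtMulVec_kleeneStar (fun i => (hu i).le) i)
    refine ⟨hpos, le_antisymm ?_ (specRad_le_iSup_ratio hA hpos)⟩
    exact (hratio _ hpos).2 (mul_mtMulVec_kleeneStar_le hB hB1 fun i => (hu i).le)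
  obtain ⟨hpos_one, hratio_one⟩ := hstar (fun _ => 1) fun _ => one_pos
  refine ⟨⟨⟨_, hpos_one, hratio_one.symm⟩, ?_⟩, fun x hx => ⟨fun h => ?_, ?_⟩⟩
  · rintro _ ⟨x, hx, rfl⟩
    exact specRad_le_iSup_ratio hA hx
  · refine ⟨x, hx, (mtMulVec_kleeneStar_eq_self hB (fun i => (hx i).le) ?_).symm⟩
    exact (hratio x hx).1 h.le
  · rintro ⟨u, hu, rfl⟩
    exact (hstar u hu).2

theorem stmt7 {n : ℕ} (hn : 0 < n) (A : Matrix (Fin n) (Fin n) ℝ)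
    (hA : ∀ i j, 0 ≤ A i j) (hlam : 0 < specRad A) :
    IsLeast {v : ℝ | ∃ x : Fin n → ℝ, (∀ i, 0 < x i) ∧
        v = ⨆ i, ⨆ j, A i j * x j / x i} (specRad A) ∧
      ∀ x : Fin n → ℝ, (∀ i, 0 < x i) →
        ((⨆ i, ⨆ j, A i j * x j / x i) = specRad A ↔
          ∃ u : Fin n → ℝ, (∀ i, 0 < u i) ∧
            x = mtMulVec (kleeneStar ((specRad A)⁻¹ • A)) u) :=
  stmt7_general A hA hlam
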